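/- Define the 5×5 matrix Â with rows (-4, 2, 0, 0, 0), (-4, 2, 0, 2, -1/2), (0, 0, 1/2, 0, -1), (0, 1, 1, 0, 0), (0, 0, 0, 0, 0) and the vector b̂ = (-1, 1/2, 1, -2, 1) ∈ ℝ^5. Define the sequence h[t] ∈ ℝ^5 by h[-1] = 0 and h[t] = ρ(Â h[t-1] + b̂) for t ∈ ℕ₀, where ρ(y) = max(0,y) componentwise. Then for all t ∈ ℕ₀, the first component (h[t])_1 equals 1 if t + 2 = 2^k for some integer k >= 2, and equals 0 otherwise; moreover ‖h[t]‖_∞ <= 2 for all t ∈ ℕ₀. -/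

import Mathlib

/-- ReLU applied componentwise. -/
noncomputable def relu {n : Type*} (v : n → ℝ) : n → ℝ := fun i => max 0 (v i)

/-- The matrix `Â` of the clocking mechanism. -/
noncomputable def Ahat : Matrix (Fin 5) (Fin 5) ℝ :=
  !![-4, 2, 0, 0, 0;
     -4, 2, 0, 2, -1/2;
     0, 0, 1/2, 0, -1;
     0, 1, 1, 0, 0;
     0, 0, 0, 0, 0]

/-- The vector `b̂` of the clocking mechanism. -/
noncomputable def bhat : Fin 5 → ℝ := ![-1, 1/2, 1, -2, 1]

/-- The sequence `h[t] ∈ ℝ⁵`: `h[−1] = 0`, `h[t] = ρ(Â h[t−1] + b̂)` for `t ∈ ℕ₀`. -/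
noncomputable def clockSeq : ℕ → Fin 5 → ℝ
  | 0 => relu (Ahat.mulVec 0 + bhat)
  | t + 1 => relu (Ahat.mulVec (clockSeq t) + bhat)

/-!
The third coordinate of `h[t]` is `2⁻ᵗ`: it halves at every step and so records the time.
Between two firings the state is `(0, a, 2⁻ᵗ, 0, 1)` with a counter `a` that doubles at every
step, and the step after `a` reaches `1` the first coordinate fires. A firing at `t + 2 = 2ᵏ`
clears the counter, and the clock, passed through the fourth coordinate, restarts it at
`4 · 2^-(t+1) = 2^(3 - 2ᵏ)`; after `2ᵏ - 3` doublings it is `1` again, so the next firing is at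
`t + 2 = 2ᵏ⁺¹`. In terms of the phase `t + 2 = 2ᵏ + j`, `j < 2ᵏ`, the state is `clockState k j`.
-/

open Matrix

noncomputable def clockStep (v : Fin 5 → ℝ) : Fin 5 → ℝ := relu (Ahat *ᵥ v + bhat)

lemma clockSeq_zero : clockSeq 0 = clockStep ![0, 0, 0, 0, 0] := by
  simp only [← zero_empty, cons_zero_zero]
  rfl

lemma clockSeq_succ (t : ℕ) : clockSeq (t + 1) = clockStep (clockSeq t) := rfl

noncomputable def countState (a ε : ℝ) : Fin 5 → ℝ := ![0, a, ε, 0, 1]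
noncomputable def fireState (ε : ℝ) : Fin 5 → ℝ := ![1, 2, ε, 0, 1]
noncomputable def resetState (ε : ℝ) : Fin 5 → ℝ := ![0, 0, ε, 2 * ε, 1]

lemma clockStep_vec (x₀ x₁ x₂ x₃ x₄ : ℝ) :
    clockStep ![x₀, x₁, x₂, x₃, x₄] = ![max 0 (-4 * x₀ + 2 * x₁ - 1),
      max 0 (-4 * x₀ + 2 * x₁ + 2 * x₃ - x₄ / 2 + 1 / 2),
      max 0 (x₂ / 2 - x₄ + 1), max 0 (x₁ + x₂ - 2), 1] := by
  ext i
  fin_cases i <;> simp [clockStep, relu, Ahat, bhat] <;> ring_nf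

lemma clockStep_countState {a ε : ℝ} (ha₀ : 0 ≤ a) (ha : a ≤ 1 / 2) (hε₀ : 0 ≤ ε) (hε : ε ≤ 1) :
    clockStep (countState a ε) = countState (2 * a) (ε / 2) := by
  norm_num [countState, clockStep_vec, ha₀, div_nonneg hε₀ zero_le_two,
    show 2 * a ≤ 1 by linarith, show a + ε ≤ 2 by linarith]

lemma clockStep_countState_one {ε : ℝ} (hε₀ : 0 ≤ ε) (hε : ε ≤ 1) :
    clockStep (countState 1 ε) = fireState (ε / 2) := by
  norm_num [countState, fireState, clockStep_vec, div_nonneg hε₀ zero_le_two,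
    show 1 + ε ≤ 2 by linarith]

lemma clockStep_fireState {ε : ℝ} (hε₀ : 0 ≤ ε) :
    clockStep (fireState ε) = resetState (ε / 2) := by
  norm_num [fireState, resetState, clockStep_vec, hε₀, div_nonneg hε₀ zero_le_two,
    mul_div_cancel₀]

lemma clockStep_resetState {ε : ℝ} (hε₀ : 0 ≤ ε) (hε : ε ≤ 2) :
    clockStep (resetState ε) = countState (4 * ε) (ε / 2) := by
  norm_num [resetState, countState, clockStep_vec, hε₀, hε, div_nonneg hε₀ zero_le_two,
    ← mul_assoc]

noncomputable def clockState (k j : ℕ) : Fin 5 → ℝ :=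
  let ε : ℝ := (1 / 2) ^ (2 ^ k + j - 2)
  if 2 ≤ k ∧ j = 0 then fireState ε
  else if 2 ≤ k ∧ j = 1 then resetState ε
  else countState ((1 / 2) ^ (2 ^ k - 1 - j)) ε

lemma half_pow_succ (n : ℕ) : (1 / 2 : ℝ) ^ n / 2 = (1 / 2) ^ (n + 1) := by
  rw [pow_succ]; ring

lemma clockStep_clockState {k j : ℕ} (hj : j + 1 < 2 ^ k) :
    clockStep (clockState k j) = clockState k (j + 1) := by
  have hε₀ : (0 : ℝ) ≤ (1 / 2) ^ (2 ^ k + j - 2) := by positivity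
  have hε : (1 / 2 : ℝ) ^ (2 ^ k + j - 2) ≤ 1 := pow_le_one₀ (by norm_num) (by norm_num)
  have hε' : (1 / 2 : ℝ) ^ (2 ^ k + j - 2) / 2 = (1 / 2) ^ (2 ^ k + (j + 1) - 2) := by
    rw [half_pow_succ]; congr 1; omega
  unfold clockState
  by_cases hfire : 2 ≤ k ∧ j = 0
  · rw [if_pos hfire, if_neg (by omega), if_pos (by omega), clockStep_fireState hε₀, hε']
  by_cases hreset : 2 ≤ k ∧ j = 1
  · have h4 : 2 ^ 2 ≤ 2 ^ k := Nat.pow_le_pow_right two_pos hreset.1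
    rw [if_neg hfire, if_pos hreset, if_neg (by omega), if_neg (by omega),
      clockStep_resetState hε₀ (by linarith), hε', hreset.2,
      show 2 ^ k + 1 - 2 = (2 ^ k - 1 - (1 + 1)) + 2 by omega, pow_add]
    congr 1
    ring
  · have ha : (1 / 2 : ℝ) ^ (2 ^ k - 1 - j) = (1 / 2) ^ (2 ^ k - 1 - (j + 1)) / 2 := by
      rw [half_pow_succ]; congr 1; omega
    rw [if_neg hfire, if_neg hreset, if_neg (by omega), if_neg (by omega), ha,
      clockStep_countState (by positivity) _ hε₀ hε, hε', mul_div_cancel₀ _ two_ne_zero]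
    exact div_le_div_of_nonneg_right (pow_le_one₀ (by norm_num) (by norm_num)) zero_le_two

lemma clockStep_clockState_last {k : ℕ} (hk : 1 ≤ k) :
    clockStep (clockState k (2 ^ k - 1)) = clockState (k + 1) 0 := by
  have h2 : 2 ^ 1 ≤ 2 ^ k := Nat.pow_le_pow_right two_pos hk
  have hpow : 2 ^ (k + 1) = 2 * 2 ^ k := by ring
  have hε₀ : (0 : ℝ) ≤ (1 / 2) ^ (2 ^ k + (2 ^ k - 1) - 2) := by positivity
  have hε : (1 / 2 : ℝ) ^ (2 ^ k + (2 ^ k - 1) - 2) ≤ 1 := pow_le_one₀ (by norm_num) (by norm_num)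
  have hcount : ¬ (2 ≤ k ∧ 2 ^ k - 1 = 0) ∧ ¬ (2 ≤ k ∧ 2 ^ k - 1 = 1) := by
    refine ⟨fun h => by omega, fun h => ?_⟩
    have : 2 ^ 2 ≤ 2 ^ k := Nat.pow_le_pow_right two_pos h.1
    omega
  unfold clockState
  rw [if_neg hcount.1, if_neg hcount.2, if_pos ⟨by omega, rfl⟩, Nat.sub_self, pow_zero,
    clockStep_countState_one hε₀ hε, half_pow_succ]
  congr 2
  omega

lemma clockSeq_zero_eq_clockState : clockSeq 0 = clockState 1 0 := by
  rw [clockSeq_zero, clockState, if_neg (by omega), if_neg (by omega)]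
  norm_num [countState, clockStep_vec]

lemma exists_clockSeq_eq_clockState (t : ℕ) :
    ∃ k j, 1 ≤ k ∧ j < 2 ^ k ∧ t + 2 = 2 ^ k + j ∧ clockSeq t = clockState k j := by
  induction t with
  | zero => exact ⟨1, 0, le_rfl, by norm_num, by norm_num, clockSeq_zero_eq_clockState⟩
  | succ t ih =>
    obtain ⟨k, j, hk, hj, ht, hseq⟩ := ih
    rw [clockSeq_succ, hseq]
    rcases Nat.lt_or_ge (j + 1) (2 ^ k) with hj' | hj'
    · exact ⟨k, j + 1, hk, hj', by omega, clockStep_clockState hj'⟩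
    · obtain rfl : j = 2 ^ k - 1 := by omega
      exact ⟨k + 1, 0, by omega, by positivity, by rw [pow_succ]; omega,
        clockStep_clockState_last hk⟩

lemma clockState_apply_zero (k j : ℕ) :
    clockState k j 0 = if 2 ≤ k ∧ j = 0 then 1 else 0 := by
  unfold clockState
  split_ifs <;> rfl

lemma norm_clockState_le (k j : ℕ) : ‖clockState k j‖ ≤ 2 := by
  have hε₀ : (0 : ℝ) ≤ (1 / 2) ^ (2 ^ k + j - 2) := by positivity
  have hε : (1 / 2 : ℝ) ^ (2 ^ k + j - 2) ≤ 1 := pow_le_one₀ (by norm_num) (by norm_num)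
  have ha₀ : (0 : ℝ) ≤ (1 / 2) ^ (2 ^ k - 1 - j) := by positivity
  have ha : (1 / 2 : ℝ) ^ (2 ^ k - 1 - j) ≤ 1 := pow_le_one₀ (by norm_num) (by norm_num)
  simp only [clockState]
  generalize (1 / 2 : ℝ) ^ (2 ^ k + j - 2) = ε at hε₀ hε ⊢
  generalize (1 / 2 : ℝ) ^ (2 ^ k - 1 - j) = a at ha₀ ha ⊢
  refine (pi_norm_le_iff_of_nonneg zero_le_two).2 fun i => ?_
  split_ifs <;> fin_cases i <;> simp [fireState, resetState, countState, abs_le] <;>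
    constructor <;> linarith

lemma two_pow_add_eq_two_pow_iff {k j m : ℕ} (hj : j < 2 ^ k) :
    2 ^ k + j = 2 ^ m ↔ m = k ∧ j = 0 := by
  constructor
  · intro h
    have hlog : Nat.log 2 (2 ^ k + j) = k :=
      Nat.log_eq_of_pow_le_of_lt_pow (by omega) (by rw [pow_succ]; omega)
    rw [h, Nat.log_pow one_lt_two] at hlog
    subst hlog
    omega
  · rintro ⟨rfl, rfl⟩
    rfl

/-- Lemma (clocking mechanism): for all `t ∈ ℕ₀`, the first component of `h[t]` equals 1
if `t + 2 = 2^k` for some integer `k ≥ 2`, and 0 otherwise; moreover `‖h[t]‖∞ ≤ 2`. -/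
theorem stmt7 (t : ℕ) :
    ((∃ k : ℕ, 2 ≤ k ∧ t + 2 = 2 ^ k) → clockSeq t 0 = 1) ∧
    ((¬ ∃ k : ℕ, 2 ≤ k ∧ t + 2 = 2 ^ k) → clockSeq t 0 = 0) ∧
    ‖clockSeq t‖ ≤ 2 := by
  obtain ⟨k, j, -, hj, ht, hseq⟩ := exists_clockSeq_eq_clockState t
  have hfire : (∃ m : ℕ, 2 ≤ m ∧ t + 2 = 2 ^ m) ↔ 2 ≤ k ∧ j = 0 := by
    simp [ht, two_pow_add_eq_two_pow_iff hj]
  rw [hseq, hfire, clockState_apply_zero]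
  exact ⟨fun h => if_pos h, fun h => if_neg h, norm_clockState_le k j⟩
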